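/- Let m ≥ 1 be an integer and let ψ : ℝ → ℂ be measurable with ∫_ℝ (1 + |x|^{2m}) |ψ(x)| dx < ∞ and ∫_ℝ x^j ψ(x) dx = 0 for every j = 0, 1, …, m−1. Then ⟨ψ, G_{2m} ψ⟩ = −((−1)^m / (2·(2m)!)) · binom(2m, m) · |∫_ℝ x^m ψ(x) dx|² = −((−1)^m π / (m!)²) · |c_m|², where c_m := (−i)^m (2π)^{−1/2} ∫_ℝ x^m ψ(x) dx is the m-th derivative of the Fourier transform ψ̂ at k = 0. -/

import Mathlib

/-! Expanding `(x - y)^{2m}` binomially splits the double integral into products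
`conj (M k) * M (2m - k)` of moments `M j = ∫ x^j ψ`. Every term with `k ≠ m` contains a moment
of order `< m` and vanishes, leaving `(-1)^m C(2m, m) |M m|²`; the second form follows from
`C(2m, m) = (2m)! / (m!)²` and `|(-i)^m (2π)^{-1/2}|² = 1 / (2π)`. -/

open MeasureTheory Filter

/-- `⟨ψ, G_{2m} ψ⟩ = −(1/(2·(2m)!)) ∬ conj(ψ(x)) (x−y)^{2m} ψ(y) dx dy`. -/
noncomputable def Gpair (m : ℕ) (ψ : ℝ → ℂ) : ℂ :=
  -(1 / (2 * (Nat.factorial (2 * m) : ℂ))) *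
    ∫ x : ℝ, ∫ y : ℝ, (starRingEnd ℂ) (ψ x) * ((x : ℂ) - (y : ℂ)) ^ (2 * m) * ψ y

lemma abs_pow_le_one_add_abs_pow {k n : ℕ} (hk : k ≤ n) (x : ℝ) : |x| ^ k ≤ 1 + |x| ^ n := by
  rcases le_or_gt |x| 1 with h | h
  · linarith [pow_le_one₀ (abs_nonneg x) h (n := k), pow_nonneg (abs_nonneg x) n]
  · linarith [pow_le_pow_right₀ h.le hk]

lemma integrable_ofReal_pow_mul {k n : ℕ} (hk : k ≤ n) {f : ℝ → ℂ} (hf : AEStronglyMeasurable f)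
    (hint : Integrable (fun x : ℝ => (1 + |x| ^ n) * ‖f x‖)) :
    Integrable (fun x : ℝ => (x : ℂ) ^ k * f x) := by
  refine hint.mono' ((Complex.continuous_ofReal.pow k).aestronglyMeasurable.mul hf) ?_
  filter_upwards with x
  rw [norm_mul, norm_pow, Complex.norm_real, Real.norm_eq_abs]
  exact mul_le_mul_of_nonneg_right (abs_pow_le_one_add_abs_pow hk x) (norm_nonneg _)

noncomputable def powMoment (ψ : ℝ → ℂ) (j : ℕ) : ℂ := ∫ x : ℝ, (x : ℂ) ^ j * ψ x

lemma integral_integral_conj_mul_sub_pow_mul {n : ℕ} {ψ : ℝ → ℂ}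
    (hψ : ∀ k ≤ n, Integrable (fun x : ℝ => (x : ℂ) ^ k * ψ x)) :
    ∫ x : ℝ, ∫ y : ℝ, (starRingEnd ℂ) (ψ x) * ((x : ℂ) - (y : ℂ)) ^ n * ψ y =
      ∑ k ∈ Finset.range (n + 1), (-1 : ℂ) ^ (k + n) * (n.choose k : ℂ) *
        ((starRingEnd ℂ) (powMoment ψ k) * powMoment ψ (n - k)) := by
  have inner : ∀ x : ℝ, ∫ y : ℝ, (starRingEnd ℂ) (ψ x) * ((x : ℂ) - (y : ℂ)) ^ n * ψ y =
      ∑ k ∈ Finset.range (n + 1), (-1 : ℂ) ^ (k + n) * (n.choose k : ℂ) * powMoment ψ (n - k) *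
        ((x : ℂ) ^ k * (starRingEnd ℂ) (ψ x)) := by
    intro x
    have expand : (fun y : ℝ => (starRingEnd ℂ) (ψ x) * ((x : ℂ) - (y : ℂ)) ^ n * ψ y) =
        fun y : ℝ => ∑ k ∈ Finset.range (n + 1), (-1 : ℂ) ^ (k + n) * (n.choose k : ℂ) *
          ((x : ℂ) ^ k * (starRingEnd ℂ) (ψ x)) * ((y : ℂ) ^ (n - k) * ψ y) := by
      funext y
      rw [sub_pow, Finset.mul_sum, Finset.sum_mul]
      refine Finset.sum_congr rfl fun k _ => ?_
      ring
    rw [expand, integral_finsetSum _ fun k _ => (hψ (n - k) (Nat.sub_le n k)).const_mul _]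
    refine Finset.sum_congr rfl fun k _ => ?_
    rw [integral_const_mul, powMoment]
    ring
  have conj_moment : ∀ k ≤ n, Integrable (fun x : ℝ => (x : ℂ) ^ k * (starRingEnd ℂ) (ψ x)) ∧
      ∫ x : ℝ, (x : ℂ) ^ k * (starRingEnd ℂ) (ψ x) = (starRingEnd ℂ) (powMoment ψ k) := by
    intro k hk
    have h := Complex.conjCLE.toContinuousLinearMap.integrable_comp (hψ k hk)
    simp only [ContinuousLinearEquiv.coe_coe, ContinuousAlgEquiv.coeCLE_apply, map_mul, map_pow,
      Complex.conjCAE_apply, Complex.conj_ofReal] at h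
    refine ⟨h, ?_⟩
    rw [powMoment, ← integral_conj]
    simp only [map_mul, map_pow, Complex.conj_ofReal]
  simp_rw [inner]
  rw [integral_finsetSum _ fun k hk =>
    (conj_moment k (Nat.lt_succ_iff.mp (Finset.mem_range.mp hk))).1.const_mul _]
  refine Finset.sum_congr rfl fun k hk => ?_
  rw [integral_const_mul, (conj_moment k (Nat.lt_succ_iff.mp (Finset.mem_range.mp hk))).2]
  ring

lemma sum_choose_conj_mul_eq_of_forall_lt_eq_zero {m : ℕ} {M : ℕ → ℂ} (hM : ∀ j < m, M j = 0) :
    ∑ k ∈ Finset.range (2 * m + 1), (-1 : ℂ) ^ (k + 2 * m) * ((2 * m).choose k : ℂ) *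
        ((starRingEnd ℂ) (M k) * M (2 * m - k)) =
      (-1 : ℂ) ^ m * ((2 * m).choose m : ℂ) * (‖M m‖ : ℂ) ^ 2 := by
  rw [Finset.sum_eq_single_of_mem m (Finset.mem_range.mpr (by omega))]
  · rw [show 2 * m - m = m by omega, Complex.conj_mul', pow_add, pow_mul, neg_one_sq, one_pow,
      mul_one]
  · intro k hk hkm
    rcases lt_or_gt_of_ne hkm with h | h
    · simp [hM k h]
    · simp [hM (2 * m - k) (by have := Finset.mem_range.mp hk; omega)]

lemma norm_neg_I_pow_mul_rpow_mul_sq (m : ℕ) (z : ℂ) :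
    ‖(-Complex.I) ^ m * (((2 * Real.pi) ^ (-(1 : ℝ) / 2) : ℝ) : ℂ) * z‖ ^ 2 =
      ‖z‖ ^ 2 / (2 * Real.pi) := by
  rw [norm_mul, norm_mul, norm_pow, norm_neg, Complex.norm_I, one_pow, one_mul, Complex.norm_real,
    Real.norm_of_nonneg (by positivity), mul_pow, ← Real.rpow_natCast, ← Real.rpow_mul (by positivity)]
  norm_num [Real.rpow_neg_one, div_eq_inv_mul]

theorem stmt13_general (m : ℕ) (ψ : ℝ → ℂ) (hmeas : Measurable ψ)
    (hint : Integrable (fun x : ℝ => (1 + |x| ^ (2 * m)) * ‖ψ x‖))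
    (hmom : ∀ j < m, ∫ x : ℝ, (x : ℂ) ^ j * ψ x = 0) :
    Gpair m ψ =
      -((-1 : ℂ) ^ m / (2 * (Nat.factorial (2 * m) : ℂ))) * (Nat.choose (2 * m) m : ℂ) *
        ((‖∫ x : ℝ, (x : ℂ) ^ m * ψ x‖ ^ 2 : ℝ) : ℂ) ∧
    Gpair m ψ =
      -((-1 : ℂ) ^ m * (Real.pi : ℂ) / (Nat.factorial m : ℂ) ^ 2) *
        ((‖(-Complex.I) ^ m * (((2 * Real.pi) ^ (-(1 : ℝ) / 2) : ℝ) : ℂ) *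
            ∫ x : ℝ, (x : ℂ) ^ m * ψ x‖ ^ 2 : ℝ) : ℂ) := by
  have hG : Gpair m ψ = -((-1 : ℂ) ^ m / (2 * (Nat.factorial (2 * m) : ℂ))) *
      (Nat.choose (2 * m) m : ℂ) * ((‖powMoment ψ m‖ ^ 2 : ℝ) : ℂ) := by
    rw [Gpair, integral_integral_conj_mul_sub_pow_mul fun k hk =>
        integrable_ofReal_pow_mul hk hmeas.aestronglyMeasurable hint,
      sum_choose_conj_mul_eq_of_forall_lt_eq_zero (M := powMoment ψ) hmom]
    push_cast
    ring
  refine ⟨hG, ?_⟩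
  have hfac : ((2 * m).choose m : ℂ) * (m.factorial : ℂ) ^ 2 = ((2 * m).factorial : ℂ) := by
    rw [two_mul, ← Nat.add_choose_mul_factorial_mul_factorial m m]
    push_cast
    ring
  rw [hG, norm_neg_I_pow_mul_rpow_mul_sq, powMoment]
  have : (Nat.factorial m : ℂ) ≠ 0 := by exact_mod_cast m.factorial_ne_zero
  have : ((2 * m).choose m : ℂ) ≠ 0 := by exact_mod_cast (Nat.choose_pos (by omega)).ne'
  have : (Real.pi : ℂ) ≠ 0 := by exact_mod_cast Real.pi_ne_zero
  rw [← hfac]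
  push_cast
  field_simp

/-- If the first `m` moments of `ψ` vanish, then
`⟨ψ, G_{2m}ψ⟩ = −((−1)^m/(2·(2m)!)) C(2m,m) |∫ x^m ψ(x) dx|²
             = −((−1)^m π/(m!)²) |c_m|²`,
where `c_m = (−i)^m (2π)^{−1/2} ∫ x^m ψ(x) dx = ψ̂^{(m)}(0)`. -/
theorem stmt13 (m : ℕ) (hm : 1 ≤ m) (ψ : ℝ → ℂ) (hmeas : Measurable ψ)
    (hint : Integrable (fun x : ℝ => (1 + |x| ^ (2 * m)) * ‖ψ x‖))
    (hmom : ∀ j < m, ∫ x : ℝ, (x : ℂ) ^ j * ψ x = 0) :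
    Gpair m ψ =
      -((-1 : ℂ) ^ m / (2 * (Nat.factorial (2 * m) : ℂ))) * (Nat.choose (2 * m) m : ℂ) *
        ((‖∫ x : ℝ, (x : ℂ) ^ m * ψ x‖ ^ 2 : ℝ) : ℂ) ∧
    Gpair m ψ =
      -((-1 : ℂ) ^ m * (Real.pi : ℂ) / (Nat.factorial m : ℂ) ^ 2) *
        ((‖(-Complex.I) ^ m * (((2 * Real.pi) ^ (-(1 : ℝ) / 2) : ℝ) : ℂ) *
            ∫ x : ℝ, (x : ℂ) ^ m * ψ x‖ ^ 2 : ℝ) : ℂ) :=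
  stmt13_general m ψ hmeas hint hmom
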